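/- Define α_i(N) = −(N(d−1)/i) · Σ_{j=0}^{i−1} (1−d)^j C(N−2i+j, N−2i) C(2i−2−j, i−1) for 1 ≤ i ≤ ⌊N/2⌋. Then α_i(N) equals the coefficient of g(y)^i in the formal power series expansion of (1+(d−1)y)^{−N} as a series in g(y) = y(1−y)/(1+(d−1)y)², i.e., (1+(d−1)y)^{−N} ≡ Σ_{i=0}^{⌊N/2⌋} α_i(N) (y(1−y))^i (1+(d−1)y)^{−2i} modulo terms of order y^{⌊N/2⌋+1}, with α_0(N) = 1. -/

import Mathlib

/-!
Lagrange inversion for `g = y (1 - y) / (1 + (d - 1) y)^2 = y / h` with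
`h = (1 + (d - 1) y)^2 / (1 - y)`. Every series `f` can be expanded in powers of `g` to any order.
Differentiating `f ≡ ∑ bᵢ gⁱ`, multiplying by `h^k` and reading off the coefficient of `y^(k-1)`
isolates `k b_k`, since `[y^(k-1)] (gⁱ)' h^k = k δᵢₖ`: this formal residue computation rests on
`g' h^2 = h - y h'`, obtained by differentiating `g h = y`.
For `f = (1 + (d - 1) y)^(-N)` one has
`f' h^k = -N (d - 1) (1 + (d - 1) y)^(-(N - 2k + 1)) (1 - y)^(-k)`, and its coefficient is the convolution of two binomial series.
-/

open Finset

namespace PowerSeries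

section CommRing

variable {R : Type*} [CommRing R]

theorem X_pow_dvd_derivative {n : ℕ} {φ : R⟦X⟧} (h : X ^ (n + 1) ∣ φ) : X ^ n ∣ d⁄dX R φ := by
  obtain ⟨ψ, rfl⟩ := h
  refine ⟨(n + 1 : R⟦X⟧) * ψ + X * d⁄dX R ψ, ?_⟩
  rw [Derivation.leibniz, derivative_pow, derivative_X, smul_eq_mul, smul_eq_mul]
  push_cast
  ring

theorem exists_X_pow_dvd_sub_sum_C_mul_X_mul_pow {q h : R⟦X⟧} (hqh : q * h = 1) (f : R⟦X⟧)
    (m : ℕ) : ∃ b : ℕ → R, X ^ (m + 1) ∣ f - ∑ i ∈ range (m + 1), C (b i) * (X * q) ^ i := by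
  induction m generalizing f with
  | zero => exact ⟨fun _ ↦ constantCoeff f, by simp [X_dvd_iff]⟩
  | succ m ih =>
    set f₁ := mk fun p ↦ coeff (p + 1) f
    obtain ⟨b, hb⟩ := ih (h * f₁)
    let b' : ℕ → R := fun | 0 => constantCoeff f | i + 1 => b i
    refine ⟨b', ?_⟩
    -- `f = f(0) + X f₁ = f(0) + (X q) (h f₁)`, and `h f₁` is expanded one order less far.
    have key : f - ∑ i ∈ range (m + 2), C (b' i) * (X * q) ^ i
        = (X * q) * (h * f₁ - ∑ i ∈ range (m + 1), C (b i) * (X * q) ^ i) := by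
      have hf : f = X * f₁ + C (constantCoeff f) := eq_X_mul_shift_add_const f
      have hshift : X * q * ∑ i ∈ range (m + 1), C (b i) * (X * q) ^ i
          = ∑ i ∈ range (m + 1), C (b i) * (X * q) ^ (i + 1) := by
        rw [mul_sum]
        exact sum_congr rfl fun i _ ↦ by ring
      rw [sum_range_succ', mul_sub, hshift]
      linear_combination hf - X * f₁ * hqh
    rw [key, pow_succ']
    exact mul_dvd_mul (dvd_mul_right X q) hb

theorem coeff_zero_eq_of_X_pow_dvd_sub_sum {q f : R⟦X⟧} {b : ℕ → R} {m : ℕ}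
    (hf : X ^ (m + 1) ∣ f - ∑ i ∈ range (m + 1), C (b i) * (X * q) ^ i) :
    b 0 = constantCoeff f := by
  rw [eq_comm, ← sub_eq_zero]
  simpa [sum_range_succ'] using X_pow_dvd_iff.mp hf 0 m.succ_pos

theorem derivative_X_mul_mul_sq_add_X_mul_derivative {q h : R⟦X⟧} (hqh : q * h = 1) :
    d⁄dX R (X * q) * h ^ 2 + X * d⁄dX R h = h := by
  have hd := congrArg (d⁄dX R) (show X * q * h = X by rw [mul_assoc, hqh, mul_one])
  rw [Derivation.leibniz, derivative_X, smul_eq_mul, smul_eq_mul] at hd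
  linear_combination h * hd - X * d⁄dX R h * hqh

theorem coeff_succ_derivative_X_mul_mul_pow_eq_zero [IsAddTorsionFree R] {q h : R⟦X⟧}
    (hqh : q * h = 1) (t : ℕ) : coeff (t + 1) (d⁄dX R (X * q) * h ^ (t + 2)) = 0 := by
  have hid : (t + 1) • (d⁄dX R (X * q) * h ^ (t + 2))
      = (t + 1) • h ^ (t + 1) - X * d⁄dX R (h ^ (t + 1)) := by
    rw [derivative_pow, nsmul_eq_mul, nsmul_eq_mul]
    push_cast
    linear_combination ((t + 1) * h ^ t) * derivative_X_mul_mul_sq_add_X_mul_derivative hqh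
  have hc : (t + 1) • coeff (t + 1) (d⁄dX R (X * q) * h ^ (t + 2)) = 0 := by
    rw [← map_nsmul, hid, map_sub, map_nsmul, coeff_succ_X_mul, coeff_derivative, nsmul_eq_mul]
    push_cast
    ring
  exact (smul_eq_zero.mp hc).resolve_left t.succ_ne_zero

theorem coeff_derivative_X_mul_pow_mul_pow [IsAddTorsionFree R] {q h : R⟦X⟧}
    (hqh : q * h = 1) (i n : ℕ) :
    coeff n (d⁄dX R ((X * q) ^ i) * h ^ (n + 1)) = if i = n + 1 then (n + 1 : R) else 0 := by
  rcases i with _ | j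
  · simp
  rw [derivative_pow, Nat.add_sub_cancel]
  rcases le_or_gt j n with hjn | hnj
  · obtain ⟨r, rfl⟩ := Nat.exists_eq_add_of_le hjn
    have hqhj : (q * h) ^ j = 1 := by rw [hqh, one_pow]
    have hsplit : ((j + 1 : ℕ) : R⟦X⟧) * (X * q) ^ j * d⁄dX R (X * q) * h ^ (j + r + 1)
        = X ^ j * ((j + 1) • (d⁄dX R (X * q) * h ^ (r + 1))) := by
      rw [nsmul_eq_mul]
      linear_combination (((j + 1 : ℕ) : R⟦X⟧) * X ^ j * d⁄dX R (X * q) * h ^ (r + 1)) * hqhj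
    rw [hsplit, coeff_X_pow_mul', if_pos (Nat.le_add_right j r), Nat.add_sub_cancel_left,
      map_nsmul]
    rcases r with _ | t
    · have hconst : constantCoeff q * constantCoeff h = 1 := by rw [← map_mul, hqh, map_one]
      simp [hconst]
    · rw [coeff_succ_derivative_X_mul_mul_pow_eq_zero hqh t, smul_zero, if_neg (by omega)]
  · rw [if_neg (by omega)]
    refine X_pow_dvd_iff.mp ?_ n hnj
    rw [mul_pow]
    exact (((dvd_mul_right _ _).mul_left _).mul_right _).mul_right _

theorem mul_coeff_succ_eq_coeff_derivative_mul_pow [IsAddTorsionFree R] {q h f : R⟦X⟧}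
    (hqh : q * h = 1) {b : ℕ → R} {m : ℕ}
    (hf : X ^ (m + 1) ∣ f - ∑ i ∈ range (m + 1), C (b i) * (X * q) ^ i) {n : ℕ} (hn : n < m) :
    (n + 1) * b (n + 1) = coeff n (d⁄dX R f * h ^ (n + 1)) := by
  have h0 := X_pow_dvd_iff.mp ((X_pow_dvd_derivative hf).mul_right (h ^ (n + 1))) n hn
  have hterm (i : ℕ) : d⁄dX R (C (b i) * (X * q) ^ i) = C (b i) * d⁄dX R ((X * q) ^ i) := by
    rw [Derivation.leibniz, derivative_C, smul_zero, add_zero, smul_eq_mul]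
  simp only [map_sub, map_sum, hterm, sub_mul, sum_mul, mul_assoc, coeff_C_mul,
    coeff_derivative_X_mul_pow_mul_pow hqh, mul_ite, mul_zero, sum_ite_eq',
    if_pos (mem_range.mpr (show n + 1 < m + 1 by omega))] at h0
  linear_combination -h0

end CommRing

section Field

variable {K : Type*} [Field K]

theorem inv_one_add_C_mul_X_eq_rescale (s : K) : (1 + C s * X)⁻¹ = rescale (-s) (mk 1) := by
  rw [inv_eq_iff_mul_eq_one (by simp)]
  have h := congrArg (rescale (-s)) (mk_one_mul_one_sub_eq_one K)
  rw [map_mul, map_sub, map_one, rescale_X, map_neg, neg_mul, sub_neg_eq_add] at h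
  exact h

theorem coeff_inv_one_add_C_mul_X_pow_succ (s : K) (n j : ℕ) :
    coeff j ((1 + C s * X)⁻¹ ^ (n + 1)) = (-s) ^ j * (n + j).choose n := by
  rw [inv_one_add_C_mul_X_eq_rescale, ← map_pow, mk_one_pow_eq_mk_choose_add, coeff_rescale,
    coeff_mk]

theorem coeff_derivative_inv_one_add_C_mul_X_pow_mul_pow (s : K) {N k : ℕ} (hk : 0 < k)
    (hkN : 2 * k ≤ N) :
    coeff (k - 1) (d⁄dX K ((1 + C s * X)⁻¹ ^ N) * ((1 + C s * X) ^ 2 * (1 - X)⁻¹) ^ k)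
      = -(N * s) * ∑ j ∈ range k, (-s) ^ j * ((N - 2 * k + j).choose (N - 2 * k) : K) *
          ((2 * k - 2 - j).choose (k - 1) : K) := by
  obtain ⟨n, rfl⟩ : ∃ n, k = n + 1 := ⟨k - 1, by omega⟩
  obtain ⟨a, rfl⟩ : ∃ a, N = 2 * (n + 1) + a := ⟨N - 2 * (n + 1), by omega⟩
  have hV : (1 - X : K⟦X⟧) = 1 + C (-1) * X := by rw [map_neg, map_one]; ring
  have hdu : d⁄dX K (1 + C s * X) = C s := by simp [Derivation.leibniz]
  have hsplit : d⁄dX K ((1 + C s * X)⁻¹ ^ (2 * (n + 1) + a)) *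
        ((1 + C s * X) ^ 2 * (1 - X)⁻¹) ^ (n + 1) = C (-((2 * (n + 1) + a : ℕ) * s)) *
          ((1 + C s * X)⁻¹ ^ (a + 1) * (1 + C (-1) * X)⁻¹ ^ (n + 1)) := by
    have hu : ((1 + C s * X) * (1 + C s * X)⁻¹) ^ (2 * (n + 1)) = 1 := by
      rw [PowerSeries.mul_inv_cancel _ (by simp), one_pow]
    rw [derivative_pow, derivative_inv', hdu, ← hV, map_neg, map_mul, map_natCast,
      show 2 * (n + 1) + a - 1 = 2 * n + 1 + a by omega]
    generalize 1 + C s * X = u at hu ⊢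
    linear_combination
      (-(C s * u⁻¹ ^ (a + 1) * ((2 * (n + 1) + a : ℕ) : K⟦X⟧) * (1 - X)⁻¹ ^ (n + 1))) * hu
  rw [hsplit, coeff_C_mul, coeff_mul, Nat.sum_antidiagonal_eq_sum_range_succ_mk,
    Nat.add_sub_cancel, Nat.add_sub_cancel_left]
  congr 1
  refine sum_congr rfl fun j hj ↦ ?_
  dsimp only
  rw [coeff_inv_one_add_C_mul_X_pow_succ, coeff_inv_one_add_C_mul_X_pow_succ, neg_neg, one_pow,
    one_mul, show n + (n - j) = 2 * (n + 1) - 2 - j by have := mem_range.mp hj; omega]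

end Field

end PowerSeries

open Finset PowerSeries in
theorem stmt_6 (N d : ℕ)
    (α : ℕ → ℝ) (hα0 : α 0 = 1)
    (hα : ∀ i, 1 ≤ i → i ≤ N / 2 →
      α i = -((N : ℝ) * ((d : ℝ) - 1) / i) *
        ∑ j ∈ range i, ((1 : ℝ) - d) ^ j *
          (Nat.choose (N - 2 * i + j) (N - 2 * i) : ℝ) *
          (Nat.choose (2 * i - 2 - j) (i - 1) : ℝ)) :
    ∀ k ≤ N / 2,
      PowerSeries.coeff (R := ℝ) k ((1 + PowerSeries.C (R := ℝ) ((d : ℝ) - 1) * PowerSeries.X)⁻¹ ^ N) =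
      PowerSeries.coeff (R := ℝ) k
        (∑ i ∈ range (N / 2 + 1),
          PowerSeries.C (R := ℝ) (α i) *
            (PowerSeries.X * (1 - PowerSeries.X)) ^ i *
            ((1 + PowerSeries.C (R := ℝ) ((d : ℝ) - 1) * PowerSeries.X)⁻¹) ^ (2 * i)) := by
  set s : ℝ := (d : ℝ) - 1
  set u : ℝ⟦X⟧ := 1 + C s * X
  have hqh : ((1 - X) * u⁻¹ ^ 2) * (u ^ 2 * (1 - X)⁻¹) = 1 := by
    have hu : u * u⁻¹ = 1 := PowerSeries.mul_inv_cancel _ (by simp [u])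
    have hV : (1 - X : ℝ⟦X⟧) * (1 - X)⁻¹ = 1 := PowerSeries.mul_inv_cancel _ (by simp)
    linear_combination (u * u⁻¹ + 1) * (1 - X) * (1 - X)⁻¹ * hu + hV
  obtain ⟨b, hb⟩ := exists_X_pow_dvd_sub_sum_C_mul_X_mul_pow hqh (u⁻¹ ^ N) (N / 2)
  have hbα : ∀ i ≤ N / 2, b i = α i := by
    rintro (_ | n) hn
    · rw [hα0, coeff_zero_eq_of_X_pow_dvd_sub_sum hb, map_pow, constantCoeff_inv]
      simp [u]
    · have hc := (mul_coeff_succ_eq_coeff_derivative_mul_pow hqh hb (n := n) (by omega)).trans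
        (coeff_derivative_inv_one_add_C_mul_X_pow_mul_pow s (k := n + 1) n.succ_pos (by omega))
      rw [hα (n + 1) n.succ_pos hn, show (1 : ℝ) - d = -s by ring]
      field_simp
      push_cast at hc ⊢
      linear_combination hc
  intro k hk
  rw [sum_congr rfl fun i hi ↦ show C (α i) * (X * (1 - X)) ^ i * u⁻¹ ^ (2 * i)
      = C (b i) * (X * ((1 - X) * u⁻¹ ^ 2)) ^ i by
    rw [hbα i (Nat.lt_succ_iff.mp (mem_range.mp hi)), mul_assoc, pow_mul, ← mul_pow, mul_assoc]]
  have hk' := X_pow_dvd_iff.mp hb k (by omega)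
  rwa [map_sub, sub_eq_zero] at hk'
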